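/- arXiv:2102.12148 — 9 statements merged into one kernel-verified Lean document; each statement's English description precedes it below -/
import Mathlib

section
/- A 1-absorbing primary submodule is a 2-absorbing primary submodule. -/
open Submodule

section Defs

variable {R : Type*} [CommRing R]

/-- A prime submodule: proper, and `a • m ∈ N` implies `m ∈ N` or `a ∈ (N :_R M)`. -/
def IsPrimeSubmodule {M : Type*} [AddCommGroup M] [Module R M] (N : Submodule R M) : Prop :=
  N ≠ ⊤ ∧ ∀ (a : R) (m : M), a • m ∈ N → m ∈ N ∨ a ∈ N.colon ⊤

/-- The `M`-radical of `N`: intersection of all prime submodules containing `N`. -/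
def Mrad {M : Type*} [AddCommGroup M] [Module R M] (N : Submodule R M) : Submodule R M :=
  sInf {P | IsPrimeSubmodule P ∧ N ≤ P}

/-- A 1-absorbing primary submodule. -/
def Is1AbsPrimary {M : Type*} [AddCommGroup M] [Module R M] (N : Submodule R M) : Prop :=
  N ≠ ⊤ ∧ ∀ a b : R, ¬ IsUnit a → ¬ IsUnit b → ∀ m : M,
    (a * b) • m ∈ N → a * b ∈ N.colon ⊤ ∨ m ∈ Mrad N

/-- A 2-absorbing primary submodule. -/
def Is2AbsPrimary {M : Type*} [AddCommGroup M] [Module R M] (N : Submodule R M) : Prop :=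
  N ≠ ⊤ ∧ ∀ (a b : R) (m : M), (a * b) • m ∈ N →
    a * b ∈ N.colon ⊤ ∨ a • m ∈ Mrad N ∨ b • m ∈ Mrad N

/-- A 1-absorbing primary ideal. -/
def Is1AbsPrimaryIdeal {A : Type*} [CommRing A] (I : Ideal A) : Prop :=
  I ≠ ⊤ ∧ ∀ a b c : A, ¬ IsUnit a → ¬ IsUnit b → ¬ IsUnit c →
    a * b * c ∈ I → a * b ∈ I ∨ c ∈ I.radical

/-- A multiplication module: every submodule `N` satisfies `N = (N :_R M) M`. -/
def IsMultiplicationModule (R M : Type*) [CommRing R] [AddCommGroup M] [Module R M] : Prop :=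
  ∀ N : Submodule R M, N = (N.colon ⊤) • (⊤ : Submodule R M)

end Defs

section

variable {R M : Type*} [CommRing R] [AddCommGroup M] [Module R M]

theorem le_Mrad (N : Submodule R M) : N ≤ Mrad N :=
  le_sInf fun _ hP => hP.2

theorem smul_mem_Mrad_of_mul_smul_mem_of_isUnit {N : Submodule R M} {a b : R} {m : M}
    (ha : IsUnit a) (h : (a * b) • m ∈ N) : b • m ∈ Mrad N := by
  rw [mul_smul] at h
  exact le_Mrad N ((smul_mem_iff_of_isUnit N ha).mp h)

end

theorem one_abs_primary_is_two_abs_primary {R M : Type*} [CommRing R] [AddCommGroup M]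
    [Module R M] (N : Submodule R M) (hN : Is1AbsPrimary N) :
    Is2AbsPrimary N := by
  obtain ⟨hN_ne_top, hN_absorb⟩ := hN
  refine ⟨hN_ne_top, fun a b m habm => ?_⟩
  by_cases ha : IsUnit a
  · exact Or.inr (Or.inr (smul_mem_Mrad_of_mul_smul_mem_of_isUnit ha habm))
  by_cases hb : IsUnit b
  · rw [mul_comm] at habm
    exact Or.inr (Or.inl (smul_mem_Mrad_of_mul_smul_mem_of_isUnit hb habm))
  exact (hN_absorb a b ha hb m habm).imp_right fun hm => Or.inl ((Mrad N).smul_mem a hm)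
end

section
/- A proper submodule N of an R-module M is 1-absorbing primary if and only if for all non-unit elements a, b ∈ R and every submodule K of M with abK ⊆ N, either ab ∈ (N :_R M) or K ⊆ M-rad(N). -/
open Submodule

theorem Submodule.forall_mem_span_singleton_smul_mem_iff {R M : Type*} [CommSemiring R]
    [AddCommMonoid M] [Module R M] {N : Submodule R M} {c : R} {m : M} :
    (∀ k ∈ span R {m}, c • k ∈ N) ↔ c • m ∈ N := by
  refine ⟨fun h => h m (mem_span_singleton_self m), fun h k hk => ?_⟩
  obtain ⟨r, rfl⟩ := mem_span_singleton.mp hk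
  rw [smul_comm]
  exact N.smul_mem r h

theorem Is1AbsPrimary.mul_mem_colon_or_le_Mrad {R M : Type*} [CommRing R] [AddCommGroup M]
    [Module R M] {N : Submodule R M} (hN : Is1AbsPrimary N) {a b : R} (ha : ¬ IsUnit a)
    (hb : ¬ IsUnit b) {K : Submodule R M} (hK : ∀ k ∈ K, (a * b) • k ∈ N) :
    a * b ∈ N.colon ⊤ ∨ K ≤ Mrad N :=
  or_iff_not_imp_left.2 fun hab k hk => (hN.2 a b ha hb k (hK k hk)).resolve_left hab

theorem one_abs_primary_iff_submodule_condition {R M : Type*} [CommRing R] [AddCommGroup M]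
    [Module R M] (N : Submodule R M) (hN : N ≠ ⊤) :
    Is1AbsPrimary N ↔
      ∀ a b : R, ¬ IsUnit a → ¬ IsUnit b → ∀ K : Submodule R M,
        (∀ k ∈ K, (a * b) • k ∈ N) → a * b ∈ N.colon ⊤ ∨ K ≤ Mrad N := by
  refine ⟨fun h a b ha hb K hK => h.mul_mem_colon_or_le_Mrad ha hb hK, fun h => ⟨hN, ?_⟩⟩
  intro a b ha hb m hm
  exact (h a b ha hb (span R {m}) (forall_mem_span_singleton_smul_mem_iff.2 hm)).imp_right
    fun hle => hle (mem_span_singleton_self m)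
end

section
/- A proper submodule N of an R-module M is 1-absorbing primary if and only if whenever I₁I₂K ⊆ N for proper ideals I₁, I₂ of R and a submodule K of M, either I₁I₂ ⊆ (N :_R M) or K ⊆ M-rad(N). -/
open Submodule

theorem Submodule.ideal_span_singleton_smul_span_singleton {R M : Type*} [CommRing R]
    [AddCommGroup M] [Module R M] (r : R) (m : M) :
    (Ideal.span {r} : Ideal R) • (R ∙ m) = R ∙ r • m := by
  rw [span_smul_span, Set.singleton_smul_singleton]

section

variable {R M : Type*} [CommRing R] [AddCommGroup M] [Module R M] {N : Submodule R M}

theorem Is1AbsPrimary.mul_le_colon_or_le_Mrad (hN : Is1AbsPrimary N) {I₁ I₂ : Ideal R}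
    (hI₁ : I₁ ≠ ⊤) (hI₂ : I₂ ≠ ⊤) {K : Submodule R M} (hK : (I₁ * I₂) • K ≤ N) :
    I₁ * I₂ ≤ N.colon ⊤ ∨ K ≤ Mrad N := by
  refine or_iff_not_imp_right.mpr fun hKrad => Ideal.mul_le.mpr fun a ha b hb => ?_
  obtain ⟨m, hmK, hmrad⟩ := Set.not_subset.mp hKrad
  have hab : (a * b) • m ∈ N := hK (smul_mem_smul (Ideal.mul_mem_mul ha hb) hmK)
  exact (hN.2 a b (fun hu => hI₁ (I₁.eq_top_of_isUnit_mem ha hu))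
    (fun hu => hI₂ (I₂.eq_top_of_isUnit_mem hb hu)) m hab).resolve_right hmrad

theorem is1AbsPrimary_of_mul_le_colon_or_le_Mrad (hN : N ≠ ⊤)
    (h : ∀ I₁ I₂ : Ideal R, I₁ ≠ ⊤ → I₂ ≠ ⊤ → ∀ K : Submodule R M,
      (I₁ * I₂) • K ≤ N → I₁ * I₂ ≤ N.colon ⊤ ∨ K ≤ Mrad N) :
    Is1AbsPrimary N := by
  refine ⟨hN, fun a b ha hb m hm => ?_⟩
  have hle : (Ideal.span {a} * Ideal.span {b}) • (R ∙ m) ≤ N := by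
    rwa [Ideal.span_singleton_mul_span_singleton, ideal_span_singleton_smul_span_singleton,
      span_singleton_le_iff_mem]
  rcases h _ _ (Ideal.span_singleton_ne_top ha) (Ideal.span_singleton_ne_top hb) _ hle
    with hcolon | hrad
  · rw [Ideal.span_singleton_mul_span_singleton, Ideal.span_singleton_le_iff_mem] at hcolon
    exact Or.inl hcolon
  · exact Or.inr (hrad (mem_span_singleton_self m))

end

theorem one_abs_primary_iff_ideal_condition {R M : Type*} [CommRing R] [AddCommGroup M]
    [Module R M] (N : Submodule R M) (hN : N ≠ ⊤) :
    Is1AbsPrimary N ↔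
      ∀ I₁ I₂ : Ideal R, I₁ ≠ ⊤ → I₂ ≠ ⊤ → ∀ K : Submodule R M,
        (I₁ * I₂) • K ≤ N → I₁ * I₂ ≤ N.colon ⊤ ∨ K ≤ Mrad N :=
  ⟨fun h _ _ hI₁ hI₂ _ hK => h.mul_le_colon_or_le_Mrad hI₁ hI₂ hK,
    is1AbsPrimary_of_mul_le_colon_or_le_Mrad hN⟩
end

section
/- Let M be a finitely generated faithful multiplication R-module and I an ideal of R. Then I is a 1-absorbing primary ideal of R if and only if IM is a 1-absorbing primary submodule of M. -/
open Submodule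

/-!
Write `(N : M)` for `N.colon ⊤`. For a finitely generated faithful multiplication module the
ideals `(Rm : M)` generate the unit ideal (Nakayama), and `c ^ 2 a ∈ I` whenever `a ∈ (IM : M)`
and `c ∈ (Rm : M)`; hence `(IM : M) = I`. Consequently `pM` is a prime submodule for every prime
`p`, and comparing `M`-rad(`IM`) with these gives `M`-rad(`IM`) = `√I M`. With these two
identities each condition translates into the other: `abm ∈ IM` says exactly that
`ab (Rm : M) ⊆ I`, and `m ∈ √I M` follows from `(Rm : M) ⊆ √I`.
-/

section

variable {R M : Type*} [CommRing R] [AddCommGroup M] [Module R M]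

theorem mul_mem_colon_of_smul_mem {N : Submodule R M} {r c : R} {m : M} (hm : r • m ∈ N)
    (hc : c ∈ (span R {m}).colon ⊤) : r * c ∈ N.colon ⊤ :=
  mem_colon.mpr fun x _ => by
    obtain ⟨s, hs⟩ := mem_span_singleton.mp (mem_colon.mp hc x trivial)
    rw [mul_smul, ← hs, smul_comm]
    exact N.smul_mem s hm

theorem IsPrimeSubmodule.isPrime_colon {P : Submodule R M} (hP : IsPrimeSubmodule P) :
    (P.colon ⊤).IsPrime where
  ne_top' h := hP.1 <| eq_top_iff.mpr fun x _ => (colon_eq_top_iff_subset _).mp h trivial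
  mem_or_mem' {a b} hab := by
    refine or_iff_not_imp_left.mpr fun ha => ?_
    obtain ⟨x, -, hx⟩ := not_forall₂.mp (mt mem_colon.mpr ha)
    refine (hP.2 b (a • x) ?_).resolve_left hx
    rw [smul_smul, mul_comm]
    exact mem_colon.mp hab x trivial

theorem radical_smul_top_le_mrad (I : Ideal R) :
    I.radical • (⊤ : Submodule R M) ≤ Mrad (I • (⊤ : Submodule R M)) := by
  refine le_sInf fun P ⟨hP, hIP⟩ => ?_
  have hI : I ≤ P.colon ⊤ := fun i hi => mem_colon.mpr fun x _ => hIP (smul_mem_smul hi trivial)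
  calc I.radical • ⊤ ≤ P.colon ⊤ • ⊤ :=
        smul_mono_left (hP.isPrime_colon.radical_le_iff.mpr hI)
    _ ≤ P := smul_le.mpr fun r hr x _ => mem_colon.mp hr x trivial

theorem mem_smul_top_of_colon_span_le (hmul : IsMultiplicationModule R M) {m : M} {J : Ideal R}
    (h : (span R {m}).colon ⊤ ≤ J) : m ∈ J • (⊤ : Submodule R M) :=
  smul_mono_left h <| (hmul (span R {m})).le (mem_span_singleton_self m)

theorem faithfulSMul_of_bot_colon_eq_bot (h : (⊥ : Submodule R M).colon ⊤ = ⊥) :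
    FaithfulSMul R M := by
  rwa [← Module.annihilator_eq_bot, ← annihilator_top, ← bot_colon, top_coe]

section Faithful

variable [FaithfulSMul R M]

theorem sq_mul_mem_of_mem_colon_smul_top {I : Ideal R} {a c : R} {m : M}
    (ha : a ∈ (I • (⊤ : Submodule R M)).colon ⊤) (hc : c ∈ (span R {m}).colon ⊤) :
    c ^ 2 * a ∈ I := by
  have hmap : (I • (⊤ : Submodule R M)).map (c • LinearMap.id) ≤ I • span R {m} := by
    rw [map_smul'']
    exact smul_mono_right _ (map_le_iff_le_comap.mpr fun x _ => mem_colon.mp hc x trivial)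
  obtain ⟨d, hd, hdm⟩ := mem_smul_span_singleton.mp
    (hmap ⟨a • m, mem_colon.mp ha m trivial, rfl⟩)
  suffices c ^ 2 * a = d * c from this ▸ I.mul_mem_right c hd
  refine eq_of_smul_eq_smul (α := M) fun y => ?_
  obtain ⟨s, hs⟩ := mem_span_singleton.mp (mem_colon.mp hc y trivial)
  simp only [LinearMap.smul_apply, LinearMap.id_apply] at hdm
  calc (c ^ 2 * a) • y = (a * c) • (c • y) := by rw [smul_smul]; congr 1; ring
    _ = s • c • a • m := by rw [← hs]; simp only [smul_smul]; congr 1; ring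
    _ = (d * c) • y := by rw [← hdm, smul_comm s d, hs, smul_smul]

variable [Module.Finite R M]

theorem one_mem_iSup_colon_span_singleton (hmul : IsMultiplicationModule R M) :
    (1 : R) ∈ ⨆ m : M, (span R {m}).colon ⊤ := by
  set θ := ⨆ m : M, (span R {m}).colon ⊤
  have hθ : (⊤ : Submodule R M) ≤ θ • ⊤ := fun x _ =>
    mem_smul_top_of_colon_span_le hmul (le_iSup (fun m : M => (span R {m}).colon ⊤) x)
  obtain ⟨r, hr1, hr0⟩ :=
    exists_sub_one_mem_and_smul_eq_zero_of_fg_of_le_smul θ ⊤ Module.Finite.fg_top hθ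
  obtain rfl : r = 0 := eq_of_smul_eq_smul fun x => by rw [hr0 x trivial, zero_smul]
  simpa using θ.neg_mem hr1

theorem colon_smul_top_eq (hmul : IsMultiplicationModule R M) (I : Ideal R) :
    (I • (⊤ : Submodule R M)).colon ⊤ = I := by
  refine le_antisymm (fun a ha => ?_) fun r hr => mem_colon.mpr fun x _ => smul_mem_smul hr trivial
  have hθ : ⨆ m : M, (span R {m}).colon ⊤ ≤ (I.colon {a}).radical :=
    iSup_le fun m c hc => ⟨2, by simpa using sq_mul_mem_of_mem_colon_smul_top ha hc⟩
  have h1 := hθ (one_mem_iSup_colon_span_singleton hmul)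
  rw [← Ideal.eq_top_iff_one, Ideal.radical_eq_top, colon_eq_top_iff_subset] at h1
  exact h1 rfl

theorem smul_top_eq_top_iff (hmul : IsMultiplicationModule R M) {I : Ideal R} :
    I • (⊤ : Submodule R M) = ⊤ ↔ I = ⊤ := by
  refine ⟨fun h => ?_, fun h => h ▸ top_smul _⟩
  rw [← colon_smul_top_eq hmul I, h, top_colon]

theorem isPrimeSubmodule_smul_top (hmul : IsMultiplicationModule R M) {p : Ideal R}
    (hp : p.IsPrime) : IsPrimeSubmodule (p • (⊤ : Submodule R M)) := by
  have hcolon := colon_smul_top_eq hmul p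
  refine ⟨mt (smul_top_eq_top_iff hmul).mp hp.ne_top, fun a m ham => ?_⟩
  rw [hcolon]
  refine or_iff_not_imp_right.mpr fun ha => mem_smul_top_of_colon_span_le hmul fun c hc => ?_
  exact (hp.mem_or_mem (hcolon ▸ mul_mem_colon_of_smul_mem ham hc)).resolve_left ha

theorem mrad_smul_top_eq (hmul : IsMultiplicationModule R M) (I : Ideal R) :
    Mrad (I • (⊤ : Submodule R M)) = I.radical • ⊤ := by
  refine le_antisymm ((hmul _).trans_le (smul_mono_left fun c hc => ?_))
    (radical_smul_top_le_mrad I)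
  rw [Ideal.radical_eq_sInf]
  refine Submodule.mem_sInf.mpr fun p ⟨hIp, hp⟩ => ?_
  have hle : Mrad (I • (⊤ : Submodule R M)) ≤ p • ⊤ :=
    sInf_le ⟨isPrimeSubmodule_smul_top hmul hp, smul_mono_left hIp⟩
  exact colon_smul_top_eq hmul p ▸ colon_mono hle le_rfl hc

end Faithful

end

theorem one_abs_primary_ideal_iff_smul_top {R M : Type*} [CommRing R] [AddCommGroup M]
    [Module R M] [Module.Finite R M] (hfaith : (⊥ : Submodule R M).colon ⊤ = ⊥)
    (hmul : IsMultiplicationModule R M) (I : Ideal R) :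
    Is1AbsPrimaryIdeal I ↔ Is1AbsPrimary (I • (⊤ : Submodule R M)) := by
  have := faithfulSMul_of_bot_colon_eq_bot hfaith
  have hcolon := colon_smul_top_eq hmul I
  rw [Is1AbsPrimaryIdeal, Is1AbsPrimary, hcolon, mrad_smul_top_eq hmul I, Ne, Ne,
    smul_top_eq_top_iff hmul]
  refine and_congr_right fun _ =>
    ⟨fun hI a b ha hb m habm => ?_, fun hN a b c ha hb _ habc => ?_⟩
  · refine or_iff_not_imp_left.mpr fun hab => mem_smul_top_of_colon_span_le hmul fun c hc => ?_
    have habc : a * b * c ∈ I := hcolon ▸ mul_mem_colon_of_smul_mem habm hc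
    have hcu : ¬IsUnit c := fun hu => hab ((I.mul_unit_mem_iff_mem hu).mp habc)
    exact (hI a b c ha hb hcu habc).resolve_left hab
  · refine or_iff_not_imp_left.mpr fun hab => ?_
    rw [← colon_smul_top_eq (M := M) hmul I.radical]
    refine mem_colon.mpr fun m _ => (hN a b ha hb (c • m) ?_).resolve_left hab
    rw [smul_smul]
    exact smul_mem_smul habc trivial
end

section
/- If N is a 1-absorbing primary submodule of a finitely generated multiplication R-module M, then √(N :_R M) is a prime ideal of R. -/
open Submodule

/-! For a prime `p ⊇ (N : M)`, the annihilator of `M` lies in `p`, so `p` is in the support of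
`M ⧸ p M` and hence `(p M : M) = p`; with the multiplication property this makes `p M` a prime
submodule containing `N`. Thus `Mrad N ≤ p M` for all such `p`, i.e. `(Mrad N : M) ≤ √(N : M)`.
If `a b ∈ √(N : M)` with `a` a non-unit, then `a^k · a^k · (b^k m) ∈ N` for all `m`, and the
1-absorbing property gives `a^(2k) ∈ (N : M)` or `b^k ∈ (Mrad N : M) ≤ √(N : M)`. -/

section PrimeSubmodule

variable {R M : Type*} [CommRing R] [AddCommGroup M] [Module R M] [Module.Finite R M]

lemma Submodule.colon_ideal_smul_top_le {p : Ideal R} [p.IsPrime]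
    (hp : Module.annihilator R M ≤ p) : (p • ⊤ : Submodule R M).colon ⊤ ≤ p := by
  have hsupp : (⟨p, inferInstance⟩ : PrimeSpectrum R) ∈
      Module.support R (M ⧸ (p • ⊤ : Submodule R M)) := by
    rw [Module.support_quotient]
    exact ⟨Module.mem_support_iff_of_finite.mpr hp,
      (PrimeSpectrum.mem_zeroLocus _ _).mpr subset_rfl⟩
  rwa [Module.mem_support_iff_of_finite, annihilator_quotient] at hsupp

lemma isPrimeSubmodule_ideal_smul_top (hmul : IsMultiplicationModule R M) {p : Ideal R}
    [hp : p.IsPrime] (hann : Module.annihilator R M ≤ p) :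
    IsPrimeSubmodule (p • ⊤ : Submodule R M) := by
  refine ⟨fun htop => hp.ne_top ?_, fun a m ham => or_iff_not_imp_left.mpr fun hm => ?_⟩
  · rw [eq_top_iff, ← top_colon (S := (⊤ : Set M)), ← htop]
    exact colon_ideal_smul_top_le hann
  · -- `R m = J M` with `J ⊄ p`; any `c ∈ J \ p` satisfies `a c M ⊆ R (a m) ⊆ p M`.
    have hJ : ¬ (span R {m}).colon ⊤ ≤ p := fun hle =>
      hm <| (hmul _).trans_le (smul_mono_left hle) (mem_span_singleton_self m)
    obtain ⟨c, hcJ, hcp⟩ := SetLike.not_le_iff_exists.mp hJ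
    have hac : a * c ∈ p := by
      refine colon_ideal_smul_top_le hann (mem_colon.mpr fun m' _ => ?_)
      obtain ⟨r, hr⟩ := mem_span_singleton.mp (mem_colon.mp hcJ m' trivial)
      rw [mul_smul, ← hr, smul_comm]
      exact (p • ⊤ : Submodule R M).smul_mem r ham
    exact mem_colon.mpr fun m' _ =>
      smul_mem_smul ((hp.mem_or_mem hac).resolve_right hcp) trivial

lemma colon_mrad_le_radical_colon (hmul : IsMultiplicationModule R M) (N : Submodule R M) :
    (Mrad N).colon ⊤ ≤ (N.colon ⊤).radical := by
  rw [Ideal.radical_eq_sInf]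
  refine le_sInf ?_
  rintro p ⟨hNp, hp⟩
  have hann : Module.annihilator R M ≤ p := fun r hr =>
    hNp <| mem_colon.mpr fun m _ => by rw [Module.mem_annihilator.mp hr m]; exact N.zero_mem
  have hN : N ≤ p • ⊤ := (hmul N).trans_le (smul_mono_left hNp)
  have hrad : Mrad N ≤ p • ⊤ := sInf_le ⟨isPrimeSubmodule_ideal_smul_top hmul hann, hN⟩
  exact (colon_mono hrad le_rfl).trans (colon_ideal_smul_top_le hann)

end PrimeSubmodule

lemma Is1AbsPrimary.mul_self_mem_or_mem_colon_mrad {R M : Type*} [CommRing R] [AddCommGroup M]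
    [Module R M] {N : Submodule R M} (hN : Is1AbsPrimary N) {x y : R} (hx : ¬IsUnit x)
    (hxy : x * y ∈ N.colon ⊤) : x * x ∈ N.colon ⊤ ∨ y ∈ (Mrad N).colon ⊤ :=
  or_iff_not_imp_left.mpr fun hxx => mem_colon.mpr fun m _ =>
    (hN.2 x x hx hx (y • m) (by
      rw [smul_smul, mul_assoc, mul_smul]
      exact N.smul_mem x (mem_colon.mp hxy m trivial))).resolve_left hxx

theorem radical_colon_isPrime {R M : Type*} [CommRing R] [AddCommGroup M]
    [Module R M] [Module.Finite R M] (hmul : IsMultiplicationModule R M)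
    (N : Submodule R M) (hN : Is1AbsPrimary N) :
    ((N.colon ⊤).radical).IsPrime := by
  refine Ideal.isPrime_iff.mpr ⟨fun htop => hN.1 ?_, fun {a b} hab => ?_⟩
  · rw [Ideal.radical_eq_top, colon_eq_top_iff_subset] at htop
    exact eq_top_iff.mpr fun m _ => htop trivial
  by_cases ha : IsUnit a
  · exact Or.inr ((Ideal.unit_mul_mem_iff_mem _ ha).mp hab)
  obtain ⟨n, hn⟩ := hab
  have hab' : a ^ (n + 1) * b ^ (n + 1) ∈ N.colon ⊤ := by
    rw [← mul_pow, pow_succ]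
    exact Ideal.mul_mem_right _ _ hn
  rcases hN.mul_self_mem_or_mem_colon_mrad (mt isUnit_pow_succ_iff.mp ha) hab' with haa | hbn
  · exact Or.inl ⟨(n + 1) + (n + 1), by rwa [pow_add]⟩
  · exact Or.inr (Ideal.mem_radical_of_pow_mem (colon_mrad_le_radical_colon hmul N hbn))
end

section
/- Let f: M₁ → M₂ be a surjective R-module homomorphism. If N₁ is a 1-absorbing primary submodule of M₁ containing ker(f), then f(N₁) is a 1-absorbing primary submodule of M₂. -/
open Submodule

section MapOfSurjective

variable {R M₁ M₂ : Type*} [CommRing R] [AddCommGroup M₁] [Module R M₁]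
  [AddCommGroup M₂] [Module R M₂] {f : M₁ →ₗ[R] M₂}

theorem Submodule.colon_top_le_colon_top_map (hf : Function.Surjective f)
    (N : Submodule R M₁) : N.colon ⊤ ≤ (N.map f).colon ⊤ := by
  intro r hr
  rw [mem_colon] at hr ⊢
  intro y _
  obtain ⟨x, rfl⟩ := hf y
  rw [← map_smul]
  exact mem_map_of_mem (hr x trivial)

theorem IsPrimeSubmodule.comap_of_surjective (hf : Function.Surjective f)
    {P : Submodule R M₂} (hP : IsPrimeSubmodule P) : IsPrimeSubmodule (P.comap f) := by
  obtain ⟨hP_ne_top, hP_prime⟩ := hP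
  refine ⟨fun htop => hP_ne_top ?_, fun r x hrx => ?_⟩
  · rw [← map_comap_eq_of_surjective hf P, htop, Submodule.map_top,
      LinearMap.range_eq_top.mpr hf]
  · refine (hP_prime r (f x) (by rwa [← map_smul])).imp id fun hr => ?_
    rw [mem_colon] at hr ⊢
    intro y _
    rw [mem_comap, map_smul]
    exact hr (f y) trivial

theorem map_Mrad_le (hf : Function.Surjective f) (N : Submodule R M₁) :
    (Mrad N).map f ≤ Mrad (N.map f) := by
  rintro _ ⟨x, hx : x ∈ Mrad N, rfl⟩
  rw [Mrad, mem_sInf] at hx ⊢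
  rintro P ⟨hP, hNP⟩
  exact hx (P.comap f) ⟨hP.comap_of_surjective hf, map_le_iff_le_comap.mp hNP⟩

end MapOfSurjective

theorem map_one_abs_primary {R M₁ M₂ : Type*} [CommRing R] [AddCommGroup M₁] [Module R M₁]
    [AddCommGroup M₂] [Module R M₂] (f : M₁ →ₗ[R] M₂) (hf : Function.Surjective f)
    (N₁ : Submodule R M₁) (hker : LinearMap.ker f ≤ N₁) (hN₁ : Is1AbsPrimary N₁) :
    Is1AbsPrimary (N₁.map f) := by
  obtain ⟨hN₁_ne_top, hN₁_abs⟩ := hN₁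
  have hcomap_map : (N₁.map f).comap f = N₁ := comap_map_eq_self hker
  refine ⟨fun htop => hN₁_ne_top ?_, fun a b ha hb y hy => ?_⟩
  · rw [← hcomap_map, htop, comap_top]
  obtain ⟨x, rfl⟩ := hf y
  have hx : (a * b) • x ∈ N₁ := by
    rw [← hcomap_map, mem_comap, map_smul]
    exact hy
  exact (hN₁_abs a b ha hb x hx).imp (colon_top_le_colon_top_map hf N₁ ·)
    fun h => map_Mrad_le hf N₁ (mem_map_of_mem h)
end

section
/- Let N₂ ⊆ N₁ be submodules of an R-module M. Then N₁ is a 1-absorbing primary submodule of M if and only if N₁/N₂ is a 1-absorbing primary submodule of M/N₂. -/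
/-! Pulling back along a surjective linear map `f : M → M'` preserves colons, properness and
primality of submodules, hence commutes with `Mrad`, and so it preserves and reflects being
1-absorbing primary. Apply this to `M → M/N₂`: since `N₂ ≤ N₁`, `N₁` is the pullback of `N₁/N₂`. -/

open Submodule

section Comap

variable {R M M' : Type*} [CommRing R] [AddCommGroup M] [Module R M] [AddCommGroup M']
  [Module R M'] {f : M →ₗ[R] M'}

lemma comap_ne_top_iff_of_surjective (hf : Function.Surjective f) {Q : Submodule R M'} :
    Q.comap f ≠ ⊤ ↔ Q ≠ ⊤ := by
  rw [← comap_top f, (comap_injective_of_surjective hf).ne_iff]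

lemma mem_colon_top_comap_iff (hf : Function.Surjective f) {Q : Submodule R M'} {a : R} :
    a ∈ (Q.comap f).colon ⊤ ↔ a ∈ Q.colon ⊤ := by
  simp only [mem_colon, Set.top_eq_univ, Set.mem_univ, forall_const, mem_comap, map_smul]
  rw [hf.forall]

lemma isPrimeSubmodule_comap_iff (hf : Function.Surjective f) {Q : Submodule R M'} :
    IsPrimeSubmodule (Q.comap f) ↔ IsPrimeSubmodule Q := by
  simp only [IsPrimeSubmodule, comap_ne_top_iff_of_surjective hf, mem_colon_top_comap_iff hf,
    mem_comap, map_smul]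
  exact and_congr_right fun _ => forall_congr' fun _ => by rw [hf.forall]

lemma mrad_comap (hf : Function.Surjective f) (Q : Submodule R M') :
    Mrad (Q.comap f) = (Mrad Q).comap f := by
  ext x
  simp only [Mrad, mem_comap, mem_sInf, Set.mem_ofPred_eq]
  constructor
  · rintro hx Q' ⟨hQ', hQQ'⟩
    exact hx _ ⟨(isPrimeSubmodule_comap_iff hf).2 hQ', comap_mono hQQ'⟩
  · rintro hx P ⟨hP, hQP⟩
    -- `P ⊇ f⁻¹ Q ⊇ ker f`, so `P` is the pullback of the prime `f P ⊇ Q`.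
    have hP_eq : (P.map f).comap f = P :=
      comap_map_eq_self ((LinearMap.ker_le_comap f).trans hQP)
    have hprime : IsPrimeSubmodule (P.map f) := by
      rwa [← isPrimeSubmodule_comap_iff hf, hP_eq]
    have hle : Q ≤ P.map f := by
      rwa [← comap_le_comap_iff_of_surjective hf, hP_eq]
    rw [← hP_eq]
    exact hx _ ⟨hprime, hle⟩

lemma is1AbsPrimary_comap_iff (hf : Function.Surjective f) {Q : Submodule R M'} :
    Is1AbsPrimary (Q.comap f) ↔ Is1AbsPrimary Q := by
  simp only [Is1AbsPrimary, comap_ne_top_iff_of_surjective hf, mem_colon_top_comap_iff hf,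
    mrad_comap hf, mem_comap, map_smul]
  exact and_congr_right fun _ => forall₄_congr fun _ _ _ _ => by rw [hf.forall]

end Comap

theorem one_abs_primary_iff_quotient {R M : Type*} [CommRing R] [AddCommGroup M] [Module R M]
    (N₁ N₂ : Submodule R M) (h : N₂ ≤ N₁) :
    Is1AbsPrimary N₁ ↔ Is1AbsPrimary (N₁.map N₂.mkQ) := by
  rw [← is1AbsPrimary_comap_iff N₂.mkQ_surjective, comap_map_mkQ, sup_eq_right.mpr h]
end

section
/- Let S be a multiplicatively closed subset of a commutative ring R and M an R-module. If N is a 1-absorbing primary submodule of M and S⁻¹N ≠ S⁻¹M, then S⁻¹N is a 1-absorbing primary submodule of the S⁻¹R-module S⁻¹M. -/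
open Submodule

/-!
A prime submodule of `S⁻¹M` pulls back along `M → S⁻¹M` to a prime submodule of `M` (or to all
of `M`), so `x ∈ M-rad(N)` gives `x / s ∈ M-rad(S⁻¹N)`. If `(a/s)(b/s')(m/u) ∈ S⁻¹N`, clearing
denominators yields `t ∈ S` with `(a b) (t m) ∈ N`; since `a`, `b` are non-units of `R` when
`a/s`, `b/s'` are non-units of `S⁻¹R`, the 1-absorbing property of `N` applies, and both of its
alternatives survive localization.
-/

section Localization

variable {R A : Type*} [CommRing R] [CommRing A] [Algebra R A] (p : Submonoid R)
  [IsLocalization p A]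

theorem IsLocalization.isUnit_mk'_of_isUnit {r : R} (hr : IsUnit r) (s : p) :
    IsUnit (IsLocalization.mk' A r s) := by
  rw [IsLocalization.mk'_eq_mul_mk'_one]
  refine (hr.map (algebraMap R A)).mul (IsUnit.of_mul_eq_one (algebraMap R A s) ?_)
  rw [IsLocalization.mk'_spec, map_one]

end Localization

section PrimeSubmodule

variable {R M M' : Type*} [CommRing R] [AddCommGroup M] [Module R M] [AddCommGroup M']
  [Module R M']

theorem IsPrimeSubmodule.comap {P : Submodule R M'} (hP : IsPrimeSubmodule P) (f : M →ₗ[R] M')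
    (hne : P.comap f ≠ ⊤) : IsPrimeSubmodule (P.comap f) := by
  refine ⟨hne, fun a m ham => ?_⟩
  rw [mem_comap, map_smul] at ham
  refine (hP.2 a (f m) ham).imp id fun ha => ?_
  exact mem_colon.mpr fun x _ => by
    rw [mem_comap, map_smul]
    exact mem_colon.mp ha (f x) trivial

theorem IsPrimeSubmodule.restrictScalars {A : Type*} [CommRing A] [Algebra R A] [Module A M']
    [IsScalarTower R A M'] {P : Submodule A M'} (hP : IsPrimeSubmodule P) :
    IsPrimeSubmodule (P.restrictScalars R) := by
  refine ⟨by simpa using hP.1, fun a m ham => ?_⟩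
  rw [restrictScalars_mem, ← algebraMap_smul A] at ham
  refine (hP.2 _ m ham).imp id fun ha => ?_
  exact mem_colon.mpr fun x _ => by
    rw [restrictScalars_mem, ← algebraMap_smul A]
    exact mem_colon.mp ha x trivial

theorem map_mem_Mrad_of_le_comap {N : Submodule R M} {N' : Submodule R M'} (f : M →ₗ[R] M')
    (hNN' : N ≤ N'.comap f) {x : M} (hx : x ∈ Mrad N) : f x ∈ Mrad N' := by
  rw [Mrad, mem_sInf] at hx ⊢
  rintro P ⟨hP, hN'P⟩
  by_cases htop : P.comap f = ⊤
  · exact (htop ▸ mem_top : x ∈ P.comap f)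
  · exact hx _ ⟨hP.comap f htop, hNN'.trans (comap_mono hN'P)⟩

theorem Mrad_restrictScalars_le {A : Type*} [CommRing A] [Algebra R A] [Module A M']
    [IsScalarTower R A M'] (N : Submodule A M') :
    Mrad (N.restrictScalars R) ≤ (Mrad N).restrictScalars R := by
  intro x hx
  rw [Mrad, mem_sInf] at hx
  rw [restrictScalars_mem, Mrad, mem_sInf]
  exact fun P ⟨hP, hNP⟩ => hx _ ⟨hP.restrictScalars, restrictScalars_mono R hNP⟩

end PrimeSubmodule

section LocalizedSubmodule

variable {R A M M' : Type*} [CommRing R] [CommRing A] [Algebra R A] [AddCommGroup M] [Module R M]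
  [AddCommGroup M'] [Module R M'] [Module A M'] [IsScalarTower R A M']
  (p : Submonoid R) [IsLocalization p A] (f : M →ₗ[R] M') [IsLocalizedModule p f]
  {N : Submodule R M}

theorem Submodule.exists_smul_mem_of_mk'_mem_localized' {m : M} {s : p}
    (hm : IsLocalizedModule.mk' f m s ∈ N.localized' A p f) : ∃ t : p, t • m ∈ N := by
  obtain ⟨n, hn, u, hnu⟩ := hm
  obtain ⟨t, ht⟩ := (IsLocalizedModule.mk'_eq_mk'_iff f n m u s).mp hnu
  refine ⟨t * u, ?_⟩
  rw [mul_smul, ht, smul_smul]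
  exact N.smul_of_tower_mem _ hn

theorem Submodule.mk'_mem_colon_localized' {r : R} (hr : r ∈ N.colon ⊤) (s : p) :
    IsLocalization.mk' A r s ∈ (N.localized' A p f).colon ⊤ := by
  refine mem_colon.mpr fun x _ => ?_
  obtain ⟨⟨m, t⟩, rfl⟩ := IsLocalizedModule.mk'_surjective p f x
  rw [Function.uncurry_apply_pair, IsLocalizedModule.mk'_smul_mk']
  exact ⟨r • m, mem_colon.mp hr m trivial, s * t, rfl⟩

theorem Submodule.mk'_mem_Mrad_localized' {x : M} (hx : x ∈ Mrad N) (s : p) :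
    IsLocalizedModule.mk' f x s ∈ Mrad (N.localized' A p f) := by
  have hfx : f x ∈ Mrad (N.localized' A p f) := Mrad_restrictScalars_le (R := R) _
    (map_mem_Mrad_of_le_comap f ((localized'gi A p f).gc.le_u_l N) hx)
  have := (Mrad _).smul_mem (IsLocalization.mk' A (1 : R) s) hfx
  rwa [← IsLocalizedModule.mk'_one p f x, IsLocalizedModule.mk'_smul_mk', one_smul, mul_one]
    at this

end LocalizedSubmodule

theorem Is1AbsPrimary.localized' {R A M M' : Type*} [CommRing R] [CommRing A] [Algebra R A]
    [AddCommGroup M] [Module R M] [AddCommGroup M'] [Module R M'] [Module A M']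
    [IsScalarTower R A M'] (p : Submonoid R) [IsLocalization p A] (f : M →ₗ[R] M')
    [IsLocalizedModule p f] {N : Submodule R M} (hN : Is1AbsPrimary N)
    (hproper : N.localized' A p f ≠ ⊤) : Is1AbsPrimary (N.localized' A p f) := by
  refine ⟨hproper, fun a b ha hb x habx => ?_⟩
  obtain ⟨⟨ra, sa⟩, rfl⟩ := IsLocalization.mk'_surjective p a
  obtain ⟨⟨rb, sb⟩, rfl⟩ := IsLocalization.mk'_surjective p b
  obtain ⟨⟨m, u⟩, rfl⟩ := IsLocalizedModule.mk'_surjective p f x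
  rw [← IsLocalization.mk'_mul, Function.uncurry_apply_pair,
    IsLocalizedModule.mk'_smul_mk'] at habx
  obtain ⟨t, ht⟩ := exists_smul_mem_of_mk'_mem_localized' p f habx
  rw [smul_comm] at ht
  have hra : ¬IsUnit ra := fun h => ha (IsLocalization.isUnit_mk'_of_isUnit p h sa)
  have hrb : ¬IsUnit rb := fun h => hb (IsLocalization.isUnit_mk'_of_isUnit p h sb)
  rcases hN.2 ra rb hra hrb _ ht with hcolon | hrad
  · left
    rw [← IsLocalization.mk'_mul]
    exact mk'_mem_colon_localized' p f hcolon _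
  · right
    rw [Function.uncurry_apply_pair, ← IsLocalizedModule.mk'_cancel_left f m t u]
    exact mk'_mem_Mrad_localized' p f hrad _

theorem localized_one_abs_primary {R M : Type*} [CommRing R] [AddCommGroup M] [Module R M]
    (S : Submonoid R) (N : Submodule R M) (hN : Is1AbsPrimary N)
    (hproper : N.localized S ≠ ⊤) :
    Is1AbsPrimary (N.localized S) :=
  hN.localized' S (LocalizedModule.mkLinearMap S M) hproper
end

section
/- Let M be an R-module and H = I(+)N a homogeneous ideal of the idealization R(+)M (so I is an ideal of R, N a submodule of M with IM ⊆ N). If I(+)N is a 1-absorbing primary ideal of R(+)M, then I is a 1-absorbing primary ideal of R. -/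
open Submodule

/-! The inclusion `r ↦ (r, 0)` of `R` into `R(+)M` reflects units, and the 1-absorbing primary
property pulls back along any ring homomorphism that reflects units; `I` is the pullback of
`I(+)N`. -/

open TrivSqZeroExt

theorem Is1AbsPrimaryIdeal.comap {A B : Type*} [CommRing A] [CommRing B] (f : A →+* B)
    [IsLocalHom f] {J : Ideal B} (hJ : Is1AbsPrimaryIdeal J) :
    Is1AbsPrimaryIdeal (J.comap f) := by
  refine ⟨Ideal.comap_ne_top f hJ.1, fun a b c ha hb hc habc => ?_⟩
  have hmap : ∀ {x : A}, ¬IsUnit x → ¬IsUnit (f x) := fun hx hfx => hx (hfx.of_map f _)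
  rw [Ideal.mem_comap, map_mul, map_mul] at habc
  rw [Ideal.mem_comap, ← Ideal.comap_radical, Ideal.mem_comap, map_mul]
  exact hJ.2 _ _ _ (hmap ha) (hmap hb) (hmap hc) habc

instance TrivSqZeroExt.isLocalHom_inlHom {R M : Type*} [CommRing R] [AddCommGroup M]
    [Module R M] [Module Rᵐᵒᵖ M] [IsCentralScalar R M] : IsLocalHom (inlHom R M) :=
  ⟨fun _ hr => isUnit_inl_iff.mp hr⟩

theorem idealization_one_abs_primary_general {R M : Type*} [CommRing R] [AddCommGroup M] [Module R M]
    [Module Rᵐᵒᵖ M] [IsCentralScalar R M]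
    (I : Ideal R) (N : Submodule R M) (J : Ideal (TrivSqZeroExt R M))
    (hJ : ∀ x : TrivSqZeroExt R M, x ∈ J ↔ x.fst ∈ I ∧ x.snd ∈ N)
    (h : Is1AbsPrimaryIdeal J) :
    Is1AbsPrimaryIdeal I := by
  have hI : J.comap (inlHom R M) = I := by
    ext r
    simp [hJ]
  exact hI ▸ h.comap (inlHom R M)

theorem idealization_one_abs_primary {R M : Type*} [CommRing R] [AddCommGroup M] [Module R M]
    [Module Rᵐᵒᵖ M] [IsCentralScalar R M]
    (I : Ideal R) (N : Submodule R M) (J : Ideal (TrivSqZeroExt R M))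
    (hJ : ∀ x : TrivSqZeroExt R M, x ∈ J ↔ x.fst ∈ I ∧ x.snd ∈ N)
    (hIN : ∀ (a : R) (m : M), a ∈ I → a • m ∈ N)
    (h : Is1AbsPrimaryIdeal J) :
    Is1AbsPrimaryIdeal I :=
  idealization_one_abs_primary_general I N J hJ h
end
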